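/- Let R be a polynomial ring over a field of characteristic p > 0 with homogeneous maximal ideal m, let < be a term order on R, and let f be a nonzero polynomial whose initial term in_<(f) is a squarefree monomial. Then f^{p^e − 1} ∉ m^{[p^e]} for every e > 0. -/
import Mathlib


open scoped BigOperators ENNReal
open MvPolynomial

noncomputable section

/-- The height of an ideal: the infimum of the heights (lengths of chains of primes
below) of the prime ideals containing it. -/
noncomputable def idealHeight {R : Type} [CommRing R] (I : Ideal R) : ℕ∞ :=
  ⨅ (P : PrimeSpectrum R) (_ : I ≤ P.asIdeal), Order.height P

/-- An ideal is unmixed if all associated primes of `R ⧸ I` have the same height as `I`. -/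
def IsUnmixed {R : Type} [CommRing R] (I : Ideal R) : Prop :=
  ∀ P ∈ associatedPrimes R (R ⧸ I), idealHeight P = idealHeight I

/-- The `q`-th Frobenius (bracket) power `I^{[q]}` of an ideal: the ideal generated by
the `q`-th powers of the elements of `I`. -/
def frobeniusPower {R : Type} [CommRing R] (I : Ideal R) (q : ℕ) : Ideal R :=
  Ideal.span ((fun x => x ^ q) '' (I : Set R))

/-- An ideal of a polynomial ring is homogeneous if it contains all homogeneous
components of its elements. -/
def IsHomogeneousIdeal {σ K : Type} [CommRing K] (I : Ideal (MvPolynomial σ K)) : Prop :=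
  ∀ f ∈ I, ∀ n : ℕ, MvPolynomial.homogeneousComponent n f ∈ I

/-- The homogeneous maximal ideal of a polynomial ring, generated by the variables. -/
def homMaxIdeal (σ K : Type) [CommRing K] : Ideal (MvPolynomial σ K) :=
  Ideal.span (Set.range MvPolynomial.X)

/-- `ν_I(q) = max { r | I^r ⊄ m^{[q]} }`. -/
noncomputable def fptNu {σ K : Type} [CommRing K] (I : Ideal (MvPolynomial σ K))
    (q : ℕ) : ℕ :=
  sSup {r : ℕ | ¬ I ^ r ≤ frobeniusPower (homMaxIdeal σ K) q}

/-- The F-pure threshold of a proper homogeneous ideal, i.e. the limit (= supremum,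
the sequence being non-decreasing) of `ν_I(p^e)/p^e`. -/
noncomputable def fpt {σ K : Type} [CommRing K] (p : ℕ)
    (I : Ideal (MvPolynomial σ K)) : ℝ≥0∞ :=
  ⨆ e : ℕ, (fptNu I (p ^ (e + 1)) : ℝ≥0∞) / (p : ℝ≥0∞) ^ (e + 1)

/-- A ring homomorphism `f : A → B` is pure if for every `A`-module `M` the natural map
`M → B ⊗[A] M` is injective. -/
def RingHomIsPure {A B : Type} [CommRing A] [CommRing B] (f : A →+* B) : Prop :=
  ∀ (M : Type) [AddCommGroup M] [Module A M],
    letI : Algebra A B := f.toAlgebra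
    Function.Injective (TensorProduct.mk A B M 1)

/-- A ring of characteristic `p` is F-pure if its Frobenius endomorphism `x ↦ x^p` is pure. -/
def IsFPureRing (A : Type) [CommRing A] (p : ℕ) : Prop :=
  ∃ F : A →+* A, (∀ x, F x = x ^ p) ∧ RingHomIsPure F

/-- A ring of characteristic `p` is F-finite if it is module-finite over itself via the
Frobenius endomorphism `x ↦ x^p`. -/
def IsFFiniteRing (A : Type) [CommRing A] (p : ℕ) : Prop :=
  ∃ F : A →+* A, (∀ x, F x = x ^ p) ∧ F.Finite

/-- A term order: a (strict) total order on monomials, compatible with multiplication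
of monomials (addition of exponents), for which `1` (exponent `0`) is least. -/
def IsTermOrder {σ : Type} (lt : (σ →₀ ℕ) → (σ →₀ ℕ) → Prop) : Prop :=
  IsStrictTotalOrder (σ →₀ ℕ) lt ∧
  (∀ a b c : σ →₀ ℕ, lt a b → lt (a + c) (b + c)) ∧
  (∀ a : σ →₀ ℕ, a ≠ 0 → lt 0 a)

/-- `m` is the (exponent of the) initial term of `f` with respect to a term order. -/
def IsInitialMonomial {σ K : Type} [CommRing K] (lt : (σ →₀ ℕ) → (σ →₀ ℕ) → Prop)
    (f : MvPolynomial σ K) (m : σ →₀ ℕ) : Prop :=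
  m ∈ f.support ∧ ∀ m' ∈ f.support, m' ≠ m → lt m' m

/-- A squarefree monomial: all exponents are at most `1`. -/
def SquarefreeMonomial {σ : Type} (m : σ →₀ ℕ) : Prop := ∀ x, m x ≤ 1

/-- Two monomials are coprime if no variable occurs in both. -/
def CoprimeMonomials {σ : Type} (m m' : σ →₀ ℕ) : Prop := ∀ x, m x = 0 ∨ m' x = 0

/-- The property **P** of a pair `(R, I)`: for some term order there are
`height I` homogeneous elements of `I` whose initial terms are squarefree
and pairwise coprime monomials. -/
def HasPropertyP {σ K : Type} [CommRing K] (I : Ideal (MvPolynomial σ K)) : Prop :=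
  ∃ g : ℕ, (g : ℕ∞) = idealHeight I ∧
    ∃ lt : (σ →₀ ℕ) → (σ →₀ ℕ) → Prop, IsTermOrder lt ∧
      ∃ (α : Fin g → MvPolynomial σ K) (m : Fin g → (σ →₀ ℕ)),
        (∀ i, α i ∈ I) ∧
        (∀ i, ∃ d, (α i).IsHomogeneous d) ∧
        (∀ i, IsInitialMonomial lt (α i) (m i)) ∧
        (∀ i, SquarefreeMonomial (m i)) ∧
        (∀ i j, i ≠ j → CoprimeMonomials (m i) (m j))

/-- The initial ideal of `I` : the ideal generated by the initial terms of the nonzero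
elements of `I`. -/
def initialIdeal {σ K : Type} [CommRing K] (lt : (σ →₀ ℕ) → (σ →₀ ℕ) → Prop)
    (I : Ideal (MvPolynomial σ K)) : Ideal (MvPolynomial σ K) :=
  Ideal.span {t | ∃ f ∈ I, ∃ m, IsInitialMonomial lt f m ∧ t = MvPolynomial.monomial m (1 : K)}

/-- A squarefree monomial ideal: an ideal generated by squarefree monomials. -/
def IsSquarefreeMonomialIdeal {σ K : Type} [CommRing K]
    (J : Ideal (MvPolynomial σ K)) : Prop :=
  ∃ S : Set (σ →₀ ℕ), (∀ m ∈ S, SquarefreeMonomial m) ∧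
    J = Ideal.span ((fun m => MvPolynomial.monomial m (1 : K)) '' S)

/-- The lexicographic order on monomials induced by a ranking of the variables
(a smaller rank means a bigger variable). -/
def lexLt {σ : Type} (ρ : σ → ℕ) (a b : σ →₀ ℕ) : Prop :=
  ∃ x, a x < b x ∧ ∀ y, ρ y < ρ x → a y = b y

/-- `I` is generated by a regular sequence. -/
def GeneratedByRegularSequence {R : Type} [CommRing R] (I : Ideal R) : Prop :=
  ∃ rs : List R, RingTheory.Sequence.IsRegular R rs ∧ I = Ideal.ofList rs

/-- Given generators `f : ι → R` of an ideal of a polynomial ring `R` and `s` rows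
of new variables `Y`, the ideal `(entries of Y·f) : (f)` in `R[Y]`.  For
`s = height (f)` this is the (first) generic link; for `s ≥ height (f)` it is the
generic `s`-residual intersection. -/
noncomputable def genericColonIdeal {σ ι : Type} (K : Type) [CommRing K] [Fintype ι]
    (s : ℕ) (f : ι → MvPolynomial σ K) : Ideal (MvPolynomial (σ ⊕ Fin s × ι) K) :=
  Submodule.colon
    (Ideal.span (Set.range (fun i : Fin s =>
      ∑ j : ι, MvPolynomial.X (Sum.inr (i, j)) *
        MvPolynomial.rename (Sum.inl : σ → σ ⊕ Fin s × ι) (f j))))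
    (Ideal.map (MvPolynomial.rename (Sum.inl : σ → σ ⊕ Fin s × ι)).toRingHom
      (Ideal.span (Set.range f)))

/-- `J` is a generic link of `I` : for some homogeneous generating set `f_1, …, f_r`
of `I` and `g = height I`, `J` corresponds, under a renaming of the variables, to
`(entries of Y·f) : I` where `Y` is a `g × r` matrix of new indeterminates. -/
def IsGenericLinkOf {K : Type} [Field K] {σ τ : Type}
    (I : Ideal (MvPolynomial σ K)) (J : Ideal (MvPolynomial τ K)) : Prop :=
  ∃ (r g : ℕ) (f : Fin r → MvPolynomial σ K),
    I = Ideal.span (Set.range f) ∧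
    (∀ i, ∃ d, (f i).IsHomogeneous d) ∧
    ((g : ℕ∞) = idealHeight I) ∧
    ∃ e : τ ≃ (σ ⊕ Fin g × Fin r),
      J = Ideal.comap (MvPolynomial.rename (⇑e)).toRingHom (genericColonIdeal K g f)

/-- `IsNthGenericLink K n I J` : `J` is an `n`-th generic link of `I`. -/
def IsNthGenericLink (K : Type) [Field K] :
    ℕ → (σ τ : Type) → Ideal (MvPolynomial σ K) → Ideal (MvPolynomial τ K) → Prop
  | 0, σ, τ, I, J => ∃ e : τ ≃ σ, J = Ideal.comap (MvPolynomial.rename (⇑e)).toRingHom I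
  | n + 1, σ, τ, I, J => ∃ (υ : Type) (J' : Ideal (MvPolynomial υ K)),
      IsNthGenericLink K n σ υ I J' ∧ IsGenericLinkOf J' J

open Classical in
/-- The pfaffian of a `2m × 2m` matrix (intended: alternating), defined as
the signed sum over the perfect matchings of `{0, …, 2m-1}`, each matching being
encoded by the permutation listing its edges in the canonical order. -/
noncomputable def Matrix.pfaffian {R : Type} [CommRing R] {m : ℕ}
    (A : Matrix (Fin (2 * m)) (Fin (2 * m)) R) : R :=
  ∑ σ : Equiv.Perm (Fin (2 * m)),
    if (∀ i : Fin m, σ ⟨2 * i.1, by have := i.2; omega⟩ < σ ⟨2 * i.1 + 1, by have := i.2; omega⟩) ∧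
        (∀ i j : Fin m, i < j →
          σ ⟨2 * i.1, by have := i.2; omega⟩ < σ ⟨2 * j.1, by have := j.2; omega⟩) then
      (Equiv.Perm.sign σ : ℤ) •
        ∏ i : Fin m, A (σ ⟨2 * i.1, by have := i.2; omega⟩) (σ ⟨2 * i.1 + 1, by have := i.2; omega⟩)
    else 0

/-- The variables of a generic `(2n+1) × (2n+1)` alternating matrix : pairs `(i, j)`
of indices with `i < j`. -/
abbrev AltIdx (n : ℕ) : Type := {q : Fin (2 * n + 1) × Fin (2 * n + 1) // q.1 < q.2}

/-- The generic `(2n+1) × (2n+1)` alternating matrix. -/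
noncomputable def genericAltMatrix (K : Type) [CommRing K] (n : ℕ) :
    Matrix (Fin (2 * n + 1)) (Fin (2 * n + 1)) (MvPolynomial (AltIdx n) K) :=
  fun i j =>
    if h : i < j then MvPolynomial.X ⟨(i, j), h⟩
    else if h' : j < i then - MvPolynomial.X ⟨(j, i), h'⟩
    else 0

/-- The submaximal (size `2n`) pfaffian of the generic alternating matrix obtained by
deleting the row and column with index `k`. -/
noncomputable def subPfaffian (K : Type) [CommRing K] (n : ℕ) (k : Fin (2 * n + 1)) :
    MvPolynomial (AltIdx n) K :=
  Matrix.pfaffian ((genericAltMatrix K n).submatrix k.succAbove k.succAbove)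

/-- The ideal `Pf_{2n}(X)` generated by the `2n+1` submaximal pfaffians of the generic
alternating matrix, i.e. a generic height 3 Gorenstein ideal. -/
noncomputable def pfaffianIdeal (K : Type) [CommRing K] (n : ℕ) :
    Ideal (MvPolynomial (AltIdx n) K) :=
  Ideal.span (Set.range (subPfaffian K n))

/-- The generic `m × n` matrix, whose entries are the variables of `K[X]`. -/
noncomputable def genericMatrix (K : Type) [CommRing K] (m n : ℕ) :
    Matrix (Fin m) (Fin n) (MvPolynomial (Fin m × Fin n) K) :=
  fun i j => MvPolynomial.X (i, j)

/-- The ideal `I_m(X)` of maximal minors of the generic `m × n` matrix. -/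
noncomputable def maximalMinorsIdeal (K : Type) [CommRing K] (m n : ℕ) :
    Ideal (MvPolynomial (Fin m × Fin n) K) :=
  Ideal.span {f | ∃ c : Fin m → Fin n, StrictMono c ∧
    f = ((genericMatrix K m n).submatrix id c).det}

/-- The maximal minor `[i, m+i-1]` of the generic matrix on the consecutive columns
`i, i+1, …, i+m-1` (`0`-indexed). -/
noncomputable def consecutiveMinor (K : Type) [CommRing K] (m n : ℕ) (i : ℕ)
    (hi : i + m ≤ n) : MvPolynomial (Fin m × Fin n) K :=
  ((genericMatrix K m n).submatrix id
    (fun k : Fin m => (⟨i + k.1, by have := k.2; omega⟩ : Fin n))).det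

/-- A ring of characteristic `p` is strongly F-regular if for every `c` not in any
minimal prime there is `e > 0` and a splitting of the `p^e`-semilinear map sending
`1` to `c`, i.e. an additive map `φ` with `φ (a^{p^e} • x) = a • φ x` and `φ c = 1`. -/
def IsStronglyFRegular (A : Type) [CommRing A] (p : ℕ) : Prop :=
  ∀ c : A, (∀ P ∈ minimalPrimes A, c ∉ P) →
    ∃ (e : ℕ) (φ : A →+ A), 0 < e ∧ (∀ a x : A, φ (a ^ p ^ e * x) = a * φ x) ∧ φ c = 1

/-- `x` belongs to the tight closure of the ideal `I`. -/
def MemTightClosure {A : Type} [CommRing A] (p : ℕ) (I : Ideal A) (x : A) : Prop :=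
  ∃ c : A, (∀ P ∈ minimalPrimes A, c ∉ P) ∧
    ∃ N : ℕ, ∀ e ≥ N, c * x ^ p ^ e ∈ frobeniusPower I (p ^ e)

/-- A (local) ring of characteristic `p` is F-rational if every ideal generated by a
system of parameters is tightly closed. Being generated by a system of parameters is
expressed as: the number of generators equals the Krull dimension and every nonunit
lies in the radical of the ideal. -/
def IsFRational (A : Type) [CommRing A] (p : ℕ) : Prop :=
  ∀ (d : ℕ) (a : Fin d → A),
    ((d : ℕ∞) : WithBot ℕ∞) = ringKrullDim A →
    (∀ x : A, ¬ IsUnit x → x ∈ (Ideal.span (Set.range a)).radical) →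
    ∀ x : A, MemTightClosure p (Ideal.span (Set.range a)) x → x ∈ Ideal.span (Set.range a)

/-- A (local) ring together with an ideal. -/
structure LocalIdealPair : Type 1 where
  carrier : Type
  [ringStr : CommRing carrier]
  [localStr : IsLocalRing carrier]
  ideal : Ideal carrier

attribute [instance] LocalIdealPair.ringStr LocalIdealPair.localStr

/-- `Q` is a (first) universal link of `P` : for some generating set `f_1, …, f_r` of
the ideal of `P` and `g` its height, the ring of `Q` is (isomorphic to) the
localization `S` of `P[Y]` (`Y` a `g × r` matrix of indeterminates) at the extension
of the maximal ideal, and the ideal of `Q` corresponds to `(entries of Y·f)S : IS`. -/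
def IsUniversalLinkOf (P Q : LocalIdealPair) : Prop :=
  ∃ (r g : ℕ) (f : Fin r → P.carrier),
    P.ideal = Ideal.span (Set.range f) ∧
    ((g : ℕ∞) = idealHeight P.ideal) ∧
    ∃ hp : (Ideal.map (MvPolynomial.C : P.carrier →+* MvPolynomial (Fin g × Fin r) P.carrier)
        (IsLocalRing.maximalIdeal P.carrier)).IsPrime,
      ∃ ψ : Q.carrier ≃+*
          Localization (@Ideal.primeCompl (MvPolynomial (Fin g × Fin r) P.carrier) _ _ hp),
        Q.ideal = Ideal.comap ψ.toRingHom
          (Submodule.colon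
            (Ideal.map (algebraMap (MvPolynomial (Fin g × Fin r) P.carrier)
                (Localization (@Ideal.primeCompl (MvPolynomial (Fin g × Fin r) P.carrier) _ _ hp)))
              (Ideal.span (Set.range (fun i : Fin g =>
                ∑ j : Fin r, MvPolynomial.X (i, j) * MvPolynomial.C (f j)))))
            (Ideal.map ((algebraMap (MvPolynomial (Fin g × Fin r) P.carrier)
                (Localization (@Ideal.primeCompl (MvPolynomial (Fin g × Fin r) P.carrier) _ _ hp))).comp
                (MvPolynomial.C : P.carrier →+* MvPolynomial (Fin g × Fin r) P.carrier))
              P.ideal))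

/-- `IsNthUniversalLink n P Q` : `Q` is an `n`-th universal link of `P`. -/
def IsNthUniversalLink : ℕ → LocalIdealPair → LocalIdealPair → Prop
  | 0, P, Q => ∃ e : P.carrier ≃+* Q.carrier, Q.ideal = Ideal.map e.toRingHom P.ideal
  | n + 1, P, Q => ∃ C : LocalIdealPair, IsNthUniversalLink n P C ∧ IsUniversalLinkOf C Q

/-- The generators `d_{i,j}` of Hilbert's nullcone ideal for the symplectic group. -/
noncomputable def sympGen (K : Type) [CommRing K] (t n : ℕ) (i j : Fin n) :
    MvPolynomial (Fin (2 * t) × Fin n) K :=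
  ∑ k : Fin t,
    (MvPolynomial.X ((⟨k.1, by have := k.2; omega⟩ : Fin (2 * t)), i) *
        MvPolynomial.X ((⟨k.1 + t, by have := k.2; omega⟩ : Fin (2 * t)), j) -
      MvPolynomial.X ((⟨k.1, by have := k.2; omega⟩ : Fin (2 * t)), j) *
        MvPolynomial.X ((⟨k.1 + t, by have := k.2; omega⟩ : Fin (2 * t)), i))

/-- Hilbert's nullcone ideal `𝔓(X) = (X^T Ω X)` for the natural action of the
symplectic group. -/
noncomputable def sympNullconeIdeal (K : Type) [CommRing K] (t n : ℕ) :
    Ideal (MvPolynomial (Fin (2 * t) × Fin n) K) :=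
  Ideal.span {f | ∃ i j : Fin n, i < j ∧ f = sympGen K t n i j}

section Aux
variable {σ K : Type} [Field K] {lt : (σ →₀ ℕ) → (σ →₀ ℕ) → Prop}

lemma aux_lt_add (hlt : IsTermOrder lt) {u a v b : σ →₀ ℕ}
    (hu : u = a ∨ lt u a) (hv : v = b ∨ lt v b) (h : ¬(u = a ∧ v = b)) :
    lt (u + v) (a + b) := by
  obtain ⟨hsto, hadd, _⟩ := hlt
  rcases hu with rfl | hu
  · rcases hv with rfl | hv
    · exact absurd ⟨rfl, rfl⟩ h
    · have := hadd v b u hv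
      simpa [add_comm] using this
  · have h1 : lt (u + v) (a + v) := hadd u a v hu
    rcases hv with rfl | hv
    · exact h1
    · have h2 : lt (a + v) (a + b) := by
        have := hadd v b a hv
        simpa [add_comm] using this
      exact hsto.trans _ _ _ h1 h2

lemma aux_initial_mul [DecidableEq σ] (hlt : IsTermOrder lt)
    {g f : MvPolynomial σ K} {a b : σ →₀ ℕ}
    (hg : IsInitialMonomial lt g a) (hf : IsInitialMonomial lt f b) :
    IsInitialMonomial lt (g * f) (a + b) ∧
      (g * f).coeff (a + b) = g.coeff a * f.coeff b := by
  have hsto := hlt.1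
  have key : (g * f).coeff (a + b) = g.coeff a * f.coeff b := by
    rw [coeff_mul]
    refine Finset.sum_eq_single_of_mem (a, b) (Finset.HasAntidiagonal.mem_antidiagonal.mpr rfl) ?_
    rintro ⟨u, v⟩ hmem hne
    rcases eq_or_ne (g.coeff u) 0 with h | hgu
    · simp [h]
    rcases eq_or_ne (f.coeff v) 0 with h | hfv
    · simp [h]
    have huv : u + v = a + b := Finset.HasAntidiagonal.mem_antidiagonal.mp hmem
    have hu : u = a ∨ lt u a := by
      rcases eq_or_ne u a with h | h
      · exact Or.inl h
      · exact Or.inr (hg.2 u (mem_support_iff.mpr hgu) h)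
    have hv : v = b ∨ lt v b := by
      rcases eq_or_ne v b with h | h
      · exact Or.inl h
      · exact Or.inr (hf.2 v (mem_support_iff.mpr hfv) h)
    exfalso
    have hne' : ¬(u = a ∧ v = b) := by
      rintro ⟨rfl, rfl⟩; exact hne rfl
    have hlt' := aux_lt_add hlt hu hv hne'
    rw [huv] at hlt'
    exact (hsto.irrefl (a + b)) hlt'
  have hmemab : a + b ∈ (g * f).support := by
    rw [mem_support_iff, key]
    exact mul_ne_zero (mem_support_iff.mp hg.1) (mem_support_iff.mp hf.1)
  refine ⟨⟨hmemab, ?_⟩, key⟩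
  intro c hc hcne
  obtain ⟨u, hu, v, hv, rfl⟩ := Finset.mem_add.mp (MvPolynomial.support_mul _ _ hc)
  have hu' : u = a ∨ lt u a := by
    rcases eq_or_ne u a with h | h
    · exact Or.inl h
    · exact Or.inr (hg.2 u hu h)
  have hv' : v = b ∨ lt v b := by
    rcases eq_or_ne v b with h | h
    · exact Or.inl h
    · exact Or.inr (hf.2 v hv h)
  refine aux_lt_add hlt hu' hv' ?_
  rintro ⟨rfl, rfl⟩; exact hcne rfl

lemma aux_initial_pow [DecidableEq σ] (hlt : IsTermOrder lt)
    {f : MvPolynomial σ K} {m : σ →₀ ℕ} (hf : IsInitialMonomial lt f m) (n : ℕ) :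
    IsInitialMonomial lt (f ^ n) (n • m) ∧ (f ^ n).coeff (n • m) = f.coeff m ^ n := by
  induction n with
  | zero =>
    refine ⟨⟨?_, ?_⟩, by simp⟩
    · simp [mem_support_iff]
    · intro m' hm' hne
      rw [pow_zero, mem_support_iff, coeff_one] at hm'
      rw [zero_smul] at hne
      simp only [ne_eq] at hne
      exact absurd (by rintro rfl; exact hne rfl : ¬ (0 : σ →₀ ℕ) = m') (by simpa using hm')
  | succ n ih =>
    have := aux_initial_mul hlt ih.1 hf
    rw [← pow_succ] at this
    rw [succ_nsmul]
    exact ⟨this.1, by rw [this.2, ih.2, pow_succ]⟩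

end Aux

/-- If the initial term of a nonzero polynomial `f` is a squarefree
monomial, then `f^{p^e - 1} ∉ m^{[p^e]}` for every `e > 0`. -/
theorem pow_not_mem_frobeniusPower_of_squarefree_initial (p : ℕ) (hp : 0 < p)
    (K : Type) [Field K] [CharP K p] (N : ℕ)
    (lt : (Fin N →₀ ℕ) → (Fin N →₀ ℕ) → Prop) (hlt : IsTermOrder lt)
    (f : MvPolynomial (Fin N) K) (hf : f ≠ 0) (mon : Fin N →₀ ℕ)
    (hinit : IsInitialMonomial lt f mon) (hsq : SquarefreeMonomial mon) :
    ∀ e : ℕ, 0 < e →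
      f ^ (p ^ e - 1) ∉ frobeniusPower (homMaxIdeal (Fin N) K) (p ^ e) := by
  intro e he hmem
  have hq0 : 0 < p ^ e := pow_pos hp e
  haveI : NeZero p := ⟨hp.ne'⟩
  haveI : Fact p.Prime := CharP.char_is_prime_of_pos K p
  have hfrob : frobeniusPower (homMaxIdeal (Fin N) K) (p ^ e) =
      Ideal.span ((fun s => monomial s (1 : K)) ''
        (Set.range fun i : Fin N => Finsupp.single i (p ^ e))) := by
    have h1 : frobeniusPower (homMaxIdeal (Fin N) K) (p ^ e)
        = Ideal.map (iterateFrobenius (MvPolynomial (Fin N) K) p e)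
            (homMaxIdeal (Fin N) K) := by
      unfold frobeniusPower Ideal.map
      rfl
    rw [h1, homMaxIdeal, Ideal.map_span]
    congr 1
    rw [← Set.range_comp, ← Set.range_comp]
    refine congrArg _ (funext fun i => ?_)
    simp [Function.comp, iterateFrobenius_def, X_pow_eq_monomial]
  rw [hfrob, mem_ideal_span_monomial_image] at hmem
  obtain ⟨hinit', _⟩ := aux_initial_pow hlt hinit (p ^ e - 1)
  obtain ⟨s, ⟨i, rfl⟩, hle⟩ := hmem _ hinit'.1
  have hle' : p ^ e ≤ ((p ^ e - 1) • mon) i := Finsupp.single_le_iff.mp hle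
  rw [Finsupp.smul_apply, smul_eq_mul] at hle'
  have hmon : mon i ≤ 1 := hsq i
  have : (p ^ e - 1) * mon i ≤ (p ^ e - 1) * 1 := Nat.mul_le_mul_left _ hmon
  omega

end
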